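/- Let CP_{n,k}^s be the caterpillar tree with respect to the path P_k = v_1⋯v_k, where k ≥ 3, s < k/2 and n − k ≥ 1. Then CP_{n,k}^s ≻ CP_{n,k}^{s+1}. -/

import Mathlib

/-!
In `CP_{n,k}^t` every pendent edge has `μ = 1`, and the path edge `v_i v_{i+1}` has
`μ = min (m, n - m)`, where `m` counts the vertices whose nearest path vertex lies in
`v_1 ⋯ v_i`. Moving the pendent vertices from `v_{s+1}` to `v_s` changes `m` only for the edge
`v_s v_{s+1}`, where `μ` grows from `s` to `min (s + n - k, k - s) > s`. So re-attaching the
pendent edges is an injection from the edges of `CP_{n,k}^{s+1}` to those of `CP_{n,k}^s` that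
never decreases `μ` and increases it at one edge, which compares every tail sum of `r_i`.
-/

namespace TreeOrder

attribute [local instance] Classical.propDecidable

variable {V : Type*} {W : Type*}

/-- `side G u v` = number of vertices strictly closer to `u` than to `v`;
for an edge `uv` of a tree this is the order of the component of `T - uv` containing `u`. -/
noncomputable def side [Fintype V] (G : SimpleGraph V) (u v : V) : ℕ :=
  (Finset.univ.filter fun w => G.dist w u < G.dist w v).card

/-- `mu G u v = min (n_u(e), n_v(e))` for the edge `e = uv`. -/
noncomputable def mu [Fintype V] (G : SimpleGraph V) (u v : V) : ℕ :=
  min (side G u v) (side G v u)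

/-- `mu` as a function on unordered pairs. -/
noncomputable def muE [Fintype V] (G : SimpleGraph V) : Sym2 V → ℕ :=
  Sym2.lift ⟨fun u v => mu G u v, fun _ _ => min_comm _ _⟩

/-- `r G i` = number of edges `e` of `G` with `μ(e) = i`. -/
noncomputable def r [Fintype V] (G : SimpleGraph V) (i : ℕ) : ℕ :=
  (Finset.univ.filter fun e : Sym2 V => e ∈ G.edgeSet ∧ muE G e = i).card

/-- `tailSum G n k = Σ_{i=k}^{⌊n/2⌋} r_i(G)`. -/
noncomputable def tailSum [Fintype V] (G : SimpleGraph V) (n k : ℕ) : ℕ :=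
  ∑ i ∈ Finset.Icc k (n / 2), r G i

/-- The order `⪯` on trees with `n` vertices, via edge division vectors. -/
def Preceq [Fintype V] [Fintype W] (n : ℕ) (G : SimpleGraph V) (H : SimpleGraph W) : Prop :=
  ∀ k, 1 ≤ k → k ≤ n / 2 → tailSum G n k ≤ tailSum H n k

/-- The strict order `≺`. -/
def Prec [Fintype V] [Fintype W] (n : ℕ) (G : SimpleGraph V) (H : SimpleGraph W) : Prop :=
  Preceq n G H ∧ ∃ k, 1 ≤ k ∧ k ≤ n / 2 ∧ tailSum G n k < tailSum H n k

/-- Equality of edge division vectors `r(G) = r(H)`. -/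
def SameEdgeDivision [Fintype V] [Fintype W] (n : ℕ) (G : SimpleGraph V)
    (H : SimpleGraph W) : Prop :=
  ∀ i, 1 ≤ i → i ≤ n / 2 → r G i = r H i

/-- `u` is a centroidal vertex: `n_u(e) ≥ n/2` for every edge `e` incident to `u`. -/
def IsCentroidal [Fintype V] (G : SimpleGraph V) (u : V) : Prop :=
  ∀ v, G.Adj u v → Fintype.card V ≤ 2 * side G u v

/-- `u` is a proper centroidal vertex: `n_u(e) > ⌈n/2⌉` for every edge `e` incident to `u`. -/
def IsProperCentroidal [Fintype V] (G : SimpleGraph V) (u : V) : Prop :=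
  ∀ v, G.Adj u v → (Fintype.card V + 1) / 2 < side G u v

/-- The edge `uv` is a center edge: `μ(uv) = ⌊n/2⌋`. -/
def IsCenterEdge [Fintype V] (G : SimpleGraph V) (u v : V) : Prop :=
  G.Adj u v ∧ mu G u v = Fintype.card V / 2

/-- degree of a vertex -/
noncomputable def deg [Fintype V] (G : SimpleGraph V) (v : V) : ℕ :=
  (Finset.univ.filter fun w => G.Adj v w).card

/-- The path `P_n` on `n` vertices. -/
def pathG (n : ℕ) : SimpleGraph (Fin n) :=
  SimpleGraph.fromRel fun x y => (x : ℕ) + 1 = y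

/-- The star `S_n` on `n` vertices. -/
def starG (n : ℕ) : SimpleGraph (Fin n) :=
  SimpleGraph.fromRel fun x _ => (x : ℕ) = 0

/-- The double star path `CP_{n;a,b}` : a path on `n - a - b` vertices (at positions
`a, …, n - b - 1`) with `a` pendent vertices attached to its first vertex and `b`
pendent vertices attached to its last vertex. -/
def doubleStar (n a b : ℕ) : SimpleGraph (Fin n) :=
  SimpleGraph.fromRel fun x y =>
    ((x : ℕ) < a ∧ (y : ℕ) = a) ∨
    (a ≤ (x : ℕ) ∧ (x : ℕ) + 1 = y ∧ (y : ℕ) < n - b) ∨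
    ((x : ℕ) = n - b - 1 ∧ n - b ≤ (y : ℕ))

/-- `CP_{n,k}^s` : a path `v_1 ⋯ v_k` (at positions `0, …, k-1`) with all
`n - k` pendent vertices attached to `v_s` (position `s - 1`). -/
def cpOne (n k s : ℕ) : SimpleGraph (Fin n) :=
  SimpleGraph.fromRel fun x y =>
    ((x : ℕ) + 1 = y ∧ (y : ℕ) < k) ∨ ((x : ℕ) = s - 1 ∧ k ≤ (y : ℕ))

/-- The caterpillar `CP(n; n_1, …, n_k)` : a path `v_1 ⋯ v_k` (at positions `0, …, k-1`),
where pendent vertex `j` (for `k ≤ j < n`) is attached to the path vertex at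
position `f j` (so `n_i = |{j : f j = i - 1}|`). -/
def caterpillar (n k : ℕ) (f : ℕ → ℕ) : SimpleGraph (Fin n) :=
  SimpleGraph.fromRel fun x y =>
    ((x : ℕ) + 1 = y ∧ (y : ℕ) < k) ∨ (k ≤ (y : ℕ) ∧ (x : ℕ) = f y)

/-- The balanced starlike tree `SP_{n,q}` : the center is vertex `0`, and vertex
`j ≥ 1` lies on branch `(j - 1) % q` at depth `(j - 1)/q + 1`; so the `q` branches are
paths whose orders pairwise differ by at most `1`. -/
def balancedStar (n q : ℕ) : SimpleGraph (Fin n) :=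
  SimpleGraph.fromRel fun x y =>
    ((x : ℕ) = 0 ∧ 1 ≤ (y : ℕ) ∧ (y : ℕ) ≤ q) ∨ (1 ≤ (x : ℕ) ∧ (x : ℕ) + q = y)

/-- The edge-moving transformation of `G` w.r.t. the edge `uv`: contract `uv` to `u`
(moving all edges at `v` to `u`) and attach `v` to `u` as a pendent vertex. -/
def edgeMove (G : SimpleGraph V) (u v : V) : SimpleGraph V :=
  SimpleGraph.fromRel fun x y =>
    (G.Adj x y ∧ x ≠ v ∧ y ≠ v) ∨ (x = u ∧ y = v) ∨ (x = u ∧ G.Adj v y ∧ y ≠ u)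

open SimpleGraph Finset

section EdgeDivision

variable [Fintype V]

lemma side_add_side_le (G : SimpleGraph V) (u v : V) :
    side G u v + side G v u ≤ Fintype.card V := by
  unfold side
  rw [← card_union_of_disjoint (disjoint_filter.2 fun _ _ h => not_lt.2 h.le)]
  exact card_le_univ _

lemma side_add_side {G : SimpleGraph V} {u v : V} (h : ∀ w, G.dist w u ≠ G.dist w v) :
    side G u v + side G v u = Fintype.card V := by
  unfold side
  rw [← card_univ, ← card_filter_add_card_filter_not (s := univ)
    (fun w => G.dist w u < G.dist w v)]
  congr 2
  exact filter_congr fun w _ => by have := h w; omega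

lemma one_le_side_of_adj {G : SimpleGraph V} {u v : V} (h : G.Adj u v) : 1 ≤ side G u v :=
  card_pos.2 ⟨u, mem_filter.2 ⟨mem_univ _, by simp [dist_eq_one_iff_adj.2 h]⟩⟩

lemma muE_mk (G : SimpleGraph V) (u v : V) : muE G s(u, v) = mu G u v := rfl

lemma muE_le_card_div_two (G : SimpleGraph V) (e : Sym2 V) :
    muE G e ≤ Fintype.card V / 2 := by
  induction e using Sym2.ind with
  | _ u v =>
    have := side_add_side_le G u v
    rw [muE_mk, mu]
    omega

noncomputable def tailEdges (G : SimpleGraph V) (n κ : ℕ) : Finset (Sym2 V) :=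
  {e | e ∈ G.edgeSet ∧ muE G e ∈ Icc κ (n / 2)}

lemma tailSum_eq_card_tailEdges (G : SimpleGraph V) (n κ : ℕ) :
    tailSum G n κ = #(tailEdges G n κ) := by
  rw [tailEdges, card_eq_sum_card_fiberwise (f := muE G) (t := Icc κ (n / 2))
    fun e he => (mem_filter.1 he).2.2]
  refine sum_congr rfl fun i hi => ?_
  rw [r, filter_filter]
  congr 1
  exact filter_congr fun e _ =>
    ⟨fun ⟨hG, hμ⟩ => ⟨⟨hG, hμ ▸ hi⟩, hμ⟩, fun ⟨⟨hG, _⟩, hμ⟩ => ⟨hG, hμ⟩⟩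

lemma mem_tailEdges {G : SimpleGraph V} {n κ : ℕ} {e : Sym2 V} :
    e ∈ tailEdges G n κ ↔ e ∈ G.edgeSet ∧ κ ≤ muE G e ∧ muE G e ≤ n / 2 := by
  simp [tailEdges]

variable {n : ℕ} {G : SimpleGraph V} {H : SimpleGraph W} {ψ : Sym2 V → Sym2 W}

lemma mapsTo_tailEdges [Fintype W] (hW : Fintype.card W = n)
    (hmaps : Set.MapsTo ψ G.edgeSet H.edgeSet)
    (hmu : ∀ e ∈ G.edgeSet, muE G e ≤ muE H (ψ e)) (κ : ℕ) :
    Set.MapsTo ψ (tailEdges G n κ) (tailEdges H n κ) := by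
  intro e he
  rw [mem_coe, mem_tailEdges] at he ⊢
  have := hmu e he.1
  have := muE_le_card_div_two H (ψ e)
  exact ⟨hmaps he.1, by omega, by omega⟩

lemma injOn_tailEdges (hinj : Set.InjOn ψ G.edgeSet) (κ : ℕ) :
    Set.InjOn ψ (tailEdges G n κ) :=
  hinj.mono fun _ he => (mem_tailEdges.1 he).1

lemma tailSum_le_of_injOn [Fintype W] (hW : Fintype.card W = n)
    (hmaps : Set.MapsTo ψ G.edgeSet H.edgeSet)
    (hinj : Set.InjOn ψ G.edgeSet) (hmu : ∀ e ∈ G.edgeSet, muE G e ≤ muE H (ψ e)) (κ : ℕ) :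
    tailSum G n κ ≤ tailSum H n κ := by
  rw [tailSum_eq_card_tailEdges, tailSum_eq_card_tailEdges]
  exact card_le_card_of_injOn ψ (mapsTo_tailEdges hW hmaps hmu κ) (injOn_tailEdges hinj κ)

lemma tailSum_lt_of_injOn [Fintype W] (hW : Fintype.card W = n)
    (hmaps : Set.MapsTo ψ G.edgeSet H.edgeSet)
    (hinj : Set.InjOn ψ G.edgeSet) (hmu : ∀ e ∈ G.edgeSet, muE G e ≤ muE H (ψ e))
    {e₀ : Sym2 V} (he₀ : e₀ ∈ G.edgeSet) (hlt : muE G e₀ < muE H (ψ e₀)) :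
    tailSum G n (muE H (ψ e₀)) < tailSum H n (muE H (ψ e₀)) := by
  set κ := muE H (ψ e₀)
  rw [tailSum_eq_card_tailEdges, tailSum_eq_card_tailEdges,
    ← card_image_of_injOn (injOn_tailEdges hinj κ)]
  refine card_lt_card ((ssubset_iff_of_subset ?_).2 ⟨ψ e₀, ?_, ?_⟩)
  · exact image_subset_iff.2 fun e he => mapsTo_tailEdges hW hmaps hmu κ he
  · rw [mem_tailEdges]
    exact ⟨hmaps he₀, le_rfl, hW ▸ muE_le_card_div_two H (ψ e₀)⟩
  · rintro hmem
    obtain ⟨e, he, heq⟩ := mem_image.1 hmem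
    have he' := mem_tailEdges.1 he
    rw [hinj he'.1 he₀ heq] at he'
    omega

theorem prec_of_injOn [Fintype W] (hW : Fintype.card W = n)
    (hmaps : Set.MapsTo ψ G.edgeSet H.edgeSet)
    (hinj : Set.InjOn ψ G.edgeSet) (hmu : ∀ e ∈ G.edgeSet, muE G e ≤ muE H (ψ e))
    {e₀ : Sym2 V} (he₀ : e₀ ∈ G.edgeSet) (hlt : muE G e₀ < muE H (ψ e₀)) : Prec n G H :=
  ⟨fun κ _ _ => tailSum_le_of_injOn hW hmaps hinj hmu κ,
    muE H (ψ e₀), by omega, hW ▸ muE_le_card_div_two H (ψ e₀),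
    tailSum_lt_of_injOn hW hmaps hinj hmu he₀ hlt⟩

end EdgeDivision

lemma dist_eq_of_lipschitz_of_descent {G : SimpleGraph V} (D : V → V → ℕ)
    (hself : ∀ b, D b b = 0) (hlip : ∀ x y b, G.Adj x y → D x b ≤ D y b + 1)
    (hdesc : ∀ a b, a ≠ b → ∃ c, G.Adj a c ∧ D c b + 1 = D a b) (a b : V) :
    G.dist a b = D a b := by
  have hwalk : ∀ m a, D a b = m → ∃ w : G.Walk a b, w.length = m := by
    intro m
    induction m with
    | zero =>
      intro a ha
      by_cases hab : a = b
      · exact hab ▸ ⟨.nil, rfl⟩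
      · obtain ⟨c, -, hc⟩ := hdesc a b hab
        omega
    | succ m ih =>
      intro a ha
      have hab : a ≠ b := by rintro rfl; simp [hself] at ha
      obtain ⟨c, hac, hc⟩ := hdesc a b hab
      obtain ⟨w, hw⟩ := ih c (by omega)
      exact ⟨.cons hac w, by simp [hw]⟩
  have hlower : ∀ {a b} (w : G.Walk a b), D a b ≤ w.length := by
    intro a b w
    induction w with
    | nil => simp [hself]
    | @cons x y c h w ih =>
      have := hlip x y c h
      simp only [Walk.length_cons]
      omega
  obtain ⟨w, hw⟩ := hwalk _ a rfl
  obtain ⟨w', hw'⟩ := w.reachable.exists_walk_length_eq_dist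
  exact le_antisymm (hw ▸ dist_le w) (hw' ▸ hlower w')

section Caterpillar

variable {n k p : ℕ}

def spineProj (k p a : ℕ) : ℕ := if a < k then a else p

/-- Distance in `cpOne n k (p + 1)`: a pendent vertex (index `≥ k`) is one step away from its
projection `p` on the spine. -/
def cpDist (k p a b : ℕ) : ℕ :=
  if a = b then 0
  else Nat.dist (spineProj k p a) (spineProj k p b) + (if a < k then 0 else 1) +
    (if b < k then 0 else 1)

lemma cpOne_adj {x y : Fin n} :
    (cpOne n k (p + 1)).Adj x y ↔ x ≠ y ∧
      (((x : ℕ) + 1 = y ∧ (y : ℕ) < k) ∨ ((x : ℕ) = p ∧ k ≤ (y : ℕ)) ∨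
       ((y : ℕ) + 1 = x ∧ (x : ℕ) < k) ∨ ((y : ℕ) = p ∧ k ≤ (x : ℕ))) := by
  simp only [cpOne, fromRel_adj, Nat.add_sub_cancel]
  tauto

lemma cpDist_le_of_adj (hp : p < k) {x y : Fin n} (h : (cpOne n k (p + 1)).Adj x y) (b : ℕ) :
    cpDist k p x b ≤ cpDist k p y b + 1 := by
  obtain ⟨hne, h⟩ := cpOne_adj.1 h
  rw [Ne, ← Fin.val_inj] at hne
  unfold cpDist spineProj Nat.dist
  split_ifs <;> omega

lemma cpOne_exists_adj_cpDist (hp : p < k) (a b : Fin n) (hab : a ≠ b) :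
    ∃ c, (cpOne n k (p + 1)).Adj a c ∧ cpDist k p c b + 1 = cpDist k p a b := by
  have ha := a.isLt
  have hb := b.isLt
  rw [Ne, ← Fin.val_inj] at hab
  suffices ∃ c : Fin n, ((a : ℕ) ≠ c ∧ (((a : ℕ) + 1 = c ∧ (c : ℕ) < k) ∨
      ((a : ℕ) = p ∧ k ≤ (c : ℕ)) ∨ ((c : ℕ) + 1 = a ∧ (a : ℕ) < k) ∨
      ((c : ℕ) = p ∧ k ≤ (a : ℕ)))) ∧ cpDist k p c b + 1 = cpDist k p a b by
    simpa only [cpOne_adj, ne_eq, Fin.ext_iff] using this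
  by_cases hak : (a : ℕ) < k
  · rcases lt_trichotomy (if (b : ℕ) < k then (b : ℕ) else p) a with hlt | heq | hgt
    · refine ⟨⟨a - 1, by omega⟩, ?_⟩
      simp only [cpDist, spineProj, Nat.dist]
      split_ifs at * <;> omega
    · refine ⟨b, ?_⟩
      simp only [cpDist, spineProj, Nat.dist]
      split_ifs at * <;> omega
    · have : (a : ℕ) + 1 < k ∧ (a : ℕ) + 1 < n := by split_ifs at hgt <;> omega
      refine ⟨⟨a + 1, by omega⟩, ?_⟩
      simp only [cpDist, spineProj, Nat.dist, true_and]
      split_ifs at * <;> omega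
  · refine ⟨⟨p, by omega⟩, ?_⟩
    simp only [cpDist, spineProj, Nat.dist, true_and]
    split_ifs at * <;> omega

lemma cpOne_dist (hp : p < k) (a b : Fin n) :
    (cpOne n k (p + 1)).dist a b = cpDist k p a b :=
  dist_eq_of_lipschitz_of_descent (fun a b : Fin n => cpDist k p a b) (by simp [cpDist])
    (fun _ _ b h => cpDist_le_of_adj hp h b) (cpOne_exists_adj_cpDist hp) a b

lemma card_filter_fin_val (P : ℕ → Prop) [DecidablePred P] :
    #{w : Fin n | P w} = #{w ∈ Iio n | P w} := by
  rw [← Fin.map_valEmbedding_univ, filter_map, card_map]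
  rfl

lemma side_cpOne_spine (hp : p < k) {x y : Fin n} (hxy : (x : ℕ) + 1 = y)
    (hy : (y : ℕ) < k) :
    side (cpOne n k (p + 1)) x y = x + 1 + if p ≤ x then n - k else 0 := by
  have hside : side (cpOne n k (p + 1)) x y = #{w : Fin n | spineProj k p w ≤ x} := by
    refine congrArg card (filter_congr fun w _ => ?_)
    rw [cpOne_dist hp, cpOne_dist hp, ← hxy]
    unfold cpDist spineProj Nat.dist
    split_ifs <;> omega
  rw [hside, card_filter_fin_val (fun w => spineProj k p w ≤ x)]
  split_ifs with hpx
  · have : {w ∈ Iio n | spineProj k p w ≤ (x : ℕ)} = Iio ((x : ℕ) + 1) ∪ Ico k n := by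
      ext w
      rw [mem_filter]
      simp only [mem_Iio, mem_union, mem_Ico, spineProj]
      split_ifs <;> omega
    rw [this, card_union_of_disjoint (disjoint_left.2 fun w hw hw' => by
      simp only [mem_Iio, mem_Ico] at hw hw'; omega), Nat.card_Iio, Nat.card_Ico]
  · have : {w ∈ Iio n | spineProj k p w ≤ (x : ℕ)} = Iio ((x : ℕ) + 1) := by
      ext w
      rw [mem_filter]
      simp only [mem_Iio, spineProj]
      split_ifs <;> omega
    rw [this, Nat.card_Iio, add_zero]

lemma mu_cpOne_spine (hp : p < k) {x y : Fin n} (hxy : (x : ℕ) + 1 = y)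
    (hy : (y : ℕ) < k) :
    mu (cpOne n k (p + 1)) x y =
      min (x + 1 + if p ≤ x then n - k else 0) (n - (x + 1 + if p ≤ x then n - k else 0)) := by
  have hsum := side_add_side (G := cpOne n k (p + 1)) (u := x) (v := y) fun w => by
    rw [cpOne_dist hp, cpOne_dist hp, ← hxy]
    unfold cpDist spineProj Nat.dist
    split_ifs <;> omega
  rw [Fintype.card_fin] at hsum
  have := side_cpOne_spine hp hxy hy
  unfold mu
  omega

lemma mu_cpOne_pendant (hp : p < k) {x y : Fin n} (hx : (x : ℕ) = p) (hy : k ≤ (y : ℕ)) :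
    mu (cpOne n k (p + 1)) x y = 1 := by
  have hadj : (cpOne n k (p + 1)).Adj x y := cpOne_adj.2 ⟨by omega, by omega⟩
  have hleaf : side (cpOne n k (p + 1)) y x = 1 := by
    rw [side, card_eq_one]
    refine ⟨y, eq_singleton_iff_unique_mem.2
      ⟨by simp [dist_eq_one_iff_adj.2 hadj.symm], fun w hw => ?_⟩⟩
    rw [mem_filter, cpOne_dist hp, cpOne_dist hp] at hw
    have := hw.2
    unfold cpDist spineProj Nat.dist at this
    rw [← Fin.val_inj]
    split_ifs at this <;> omega
  have := one_le_side_of_adj hadj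
  unfold mu
  omega

lemma cpOne_edge_cases {e : Sym2 (Fin n)} (he : e ∈ (cpOne n k (p + 1)).edgeSet) :
    ∃ x y : Fin n, e = s(x, y) ∧
      (((x : ℕ) + 1 = y ∧ (y : ℕ) < k) ∨ ((x : ℕ) = p ∧ k ≤ (y : ℕ))) := by
  induction e using Sym2.ind with
  | _ a b =>
    obtain ⟨-, h | h | h | h⟩ := cpOne_adj.1 he
    · exact ⟨a, b, rfl, .inl h⟩
    · exact ⟨a, b, rfl, .inr h⟩
    · exact ⟨b, a, Sym2.eq_swap, .inl h⟩
    · exact ⟨b, a, Sym2.eq_swap, .inr h⟩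

/-- Re-attaches pendent edges to `a` and fixes spine edges: on an edge of a caterpillar,
`k ≤ max x y` exactly when the edge is pendent, with leaf `max x y`. -/
noncomputable def reanchor (k : ℕ) (a : Fin n) : Sym2 (Fin n) → Sym2 (Fin n) :=
  Sym2.lift ⟨fun x y => if k ≤ ((max x y : Fin n) : ℕ) then s(a, max x y) else s(x, y),
    fun x y => by dsimp only; rw [max_comm y x, Sym2.eq_swap (a := y)]⟩

lemma reanchor_spine (a : Fin n) {x y : Fin n} (hx : (x : ℕ) < k) (hy : (y : ℕ) < k) :
    reanchor k a s(x, y) = s(x, y) := by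
  simp only [reanchor, Sym2.lift_mk, Fin.coe_max]
  exact if_neg (by omega)

lemma reanchor_pendant (a : Fin n) {x y : Fin n} (hx : (x : ℕ) < k) (hy : k ≤ (y : ℕ)) :
    reanchor k a s(x, y) = s(a, y) := by
  have hxy : max x y = y := max_eq_right (Fin.le_iff_val_le_val.2 (by omega))
  simp only [reanchor, Sym2.lift_mk, hxy]
  exact if_pos hy

variable {a : Fin n}

lemma mapsTo_reanchor (ha : (a : ℕ) = p) (hp : p + 1 < k) :
    Set.MapsTo (reanchor k a) (cpOne n k (p + 2)).edgeSet (cpOne n k (p + 1)).edgeSet := by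
  intro e he
  obtain ⟨x, y, rfl, ⟨hxy, hy⟩ | ⟨hx, hy⟩⟩ := cpOne_edge_cases he
  · rw [reanchor_spine a (by omega) hy]
    exact (mem_edgeSet _).2 (cpOne_adj.2 ⟨by rw [Ne, ← Fin.val_inj]; omega, by omega⟩)
  · rw [reanchor_pendant a (by omega) hy]
    exact (mem_edgeSet _).2 (cpOne_adj.2 ⟨by rw [Ne, ← Fin.val_inj]; omega, by omega⟩)

lemma leftInvOn_reanchor {b : Fin n} (ha : (a : ℕ) = p) (hb : (b : ℕ) = p + 1)
    (hp : p + 1 < k) :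
    Set.LeftInvOn (reanchor k b) (reanchor k a) (cpOne n k (p + 2)).edgeSet := by
  intro e he
  obtain ⟨x, y, rfl, ⟨hxy, hy⟩ | ⟨hx, hy⟩⟩ := cpOne_edge_cases he
  · rw [reanchor_spine a (by omega) hy, reanchor_spine b (by omega) hy]
  · rw [reanchor_pendant a (by omega) hy, reanchor_pendant b (by omega) hy,
      Fin.val_injective (hb.trans hx.symm)]

lemma muE_le_muE_reanchor (ha : (a : ℕ) = p) (hp : 2 * p + 2 < k) :
    ∀ e ∈ (cpOne n k (p + 2)).edgeSet,
      muE (cpOne n k (p + 2)) e ≤ muE (cpOne n k (p + 1)) (reanchor k a e) := by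
  intro e he
  obtain ⟨x, y, rfl, ⟨hxy, hy⟩ | ⟨hx, hy⟩⟩ := cpOne_edge_cases he
  · rw [reanchor_spine a (by omega) hy, muE_mk, muE_mk,
      mu_cpOne_spine (by omega) hxy hy, mu_cpOne_spine (by omega) hxy hy]
    split_ifs <;> omega
  · rw [reanchor_pendant a (by omega) hy, muE_mk, muE_mk,
      mu_cpOne_pendant (by omega) hx hy, mu_cpOne_pendant (by omega) ha hy]

lemma muE_lt_muE_reanchor {b : Fin n} (ha : (a : ℕ) = p) (hb : (b : ℕ) = p + 1)
    (hp : 2 * p + 2 < k) (hkn : k < n) :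
    muE (cpOne n k (p + 2)) s(a, b) < muE (cpOne n k (p + 1)) (reanchor k a s(a, b)) := by
  rw [reanchor_spine a (by omega) (by omega), muE_mk, muE_mk,
    mu_cpOne_spine (by omega) (by omega) (by omega),
    mu_cpOne_spine (by omega) (by omega) (by omega)]
  split_ifs <;> omega

end Caterpillar

theorem stmt10_general (n k s : ℕ) (hs1 : 1 ≤ s) (hs : 2 * s < k)
    (hnk : 1 ≤ n - k) :
    Prec n (cpOne n k (s + 1)) (cpOne n k s) := by
  obtain ⟨p, rfl⟩ : ∃ p, s = p + 1 := ⟨s - 1, by omega⟩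
  obtain ⟨a, ha⟩ : ∃ a : Fin n, (a : ℕ) = p := ⟨⟨p, by omega⟩, rfl⟩
  obtain ⟨b, hb⟩ : ∃ b : Fin n, (b : ℕ) = p + 1 := ⟨⟨p + 1, by omega⟩, rfl⟩
  have hab : s(a, b) ∈ (cpOne n k (p + 2)).edgeSet :=
    (mem_edgeSet _).2 (cpOne_adj.2 ⟨by rw [Ne, ← Fin.val_inj]; omega, by omega⟩)
  exact prec_of_injOn (Fintype.card_fin n) (mapsTo_reanchor ha (by omega))
    (leftInvOn_reanchor ha hb (by omega)).injOn (muE_le_muE_reanchor ha (by omega))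
    hab (muE_lt_muE_reanchor ha hb (by omega) (by omega))

/-- Let `CP_{n,k}^s` be the caterpillar with respect to `P_k = v₁⋯v_k`, where
`k ≥ 3`, `s < k/2` and `n − k ≥ 1`. Then `CP_{n,k}^s ≻ CP_{n,k}^{s+1}`. -/
theorem stmt10 (n k s : ℕ) (hk : 3 ≤ k) (hs1 : 1 ≤ s) (hs : 2 * s < k)
    (hnk : 1 ≤ n - k) (hkn : k ≤ n) :
    Prec n (cpOne n k (s + 1)) (cpOne n k s) :=
  stmt10_general n k s hs1 hs hnk

end TreeOrder
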